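/- Let 1 < β ≤ 2 and let M ≥ 2 be an integer. The (M−1)×(M−1) real matrix G with entries G_{ij} = g_{i−j}^{(β)} for 1 ≤ i, j ≤ M−1 is symmetric and positive definite. -/

import Mathlib

/-- The fractional centred difference coefficients
`g_k^{(β)} = (−1)^k Γ(β+1) / (Γ(β/2 − k + 1) Γ(β/2 + k + 1))`. -/
noncomputable def g (β : ℝ) (k : ℤ) : ℝ :=
  (-1 : ℝ) ^ k * Real.Gamma (β + 1) /
    (Real.Gamma (β / 2 - k + 1) * Real.Gamma (β / 2 + k + 1))

/-- The `(M−1)×(M−1)` Toeplitz matrix `G` with entries `G_{ij} = g_{i−j}^{(β)}`. -/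
noncomputable def Gmat (β : ℝ) (M : ℕ) : Matrix (Fin (M - 1)) (Fin (M - 1)) ℝ :=
  Matrix.of fun i j => g β ((i : ℤ) - (j : ℤ))

open Real Finset Matrix



-- sign of Gamma on negative intervals
lemma sign_gamma {a : ℝ} (ha1 : 1/2 < a) (ha2 : a < 1) :
    ∀ q : ℕ, 0 < (-1:ℝ)^q * Real.Gamma (a - q) := by
  intro q
  induction q with
  | zero => simpa using Real.Gamma_pos_of_pos (by linarith)
  | succ q ih =>
    have hq0 : (0:ℝ) ≤ q := Nat.cast_nonneg q
    have hne : a - q - 1 ≠ 0 := by intro h; nlinarith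
    have hgam : Real.Gamma (a - q) = (a - q - 1) * Real.Gamma (a - q - 1) := by
      have := Real.Gamma_add_one hne
      rw [show a - q - 1 + 1 = a - q by ring] at this
      exact this
    have harg : a - ((q+1 : ℕ):ℝ) = a - q - 1 := by push_cast; ring
    rw [harg, pow_succ]
    have : Real.Gamma (a - q - 1) = Real.Gamma (a - q) / (a - q - 1) := by
      field_simp [hgam]
      exact hgam.symm
    rw [this]
    have h1 : (0:ℝ) < q + 1 - a := by linarith
    calc (0:ℝ) < ((-1)^q * Real.Gamma (a - q)) / (q + 1 - a) := div_pos ih h1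
      _ = (-1:ℝ)^q * -1 * (Real.Gamma (a - q) / (a - q - 1)) := by
          field_simp
          ring

lemma sign_gamma_nonneg {a : ℝ} (ha1 : 1/2 < a) (ha2 : a ≤ 1) (q : ℕ) :
    0 ≤ (-1:ℝ)^q * Real.Gamma (a - q) := by
  rcases lt_or_eq_of_le ha2 with h | rfl
  · exact (sign_gamma ha1 h q).le
  · cases q with
    | zero => simpa using Real.Gamma_pos_of_pos one_pos |>.le
    | succ p =>
      have : (1:ℝ) - ((p+1:ℕ):ℝ) = -(p:ℕ) := by push_cast; ring
      rw [this, Real.Gamma_neg_nat_eq_zero, mul_zero]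

lemma sign_gamma_inv_nonneg {a : ℝ} (ha1 : 1/2 < a) (ha2 : a ≤ 1) (q : ℕ) :
    0 ≤ (-1:ℝ)^q * (Real.Gamma (a - q))⁻¹ := by
  have h := sign_gamma_nonneg ha1 ha2 q
  have : (-1:ℝ)^q * (Real.Gamma (a - q))⁻¹ = ((-1:ℝ)^q * Real.Gamma (a - q))⁻¹ := by
    rw [mul_inv, ← inv_pow, inv_neg, inv_one]
  rw [this]
  exact inv_nonneg.mpr h


lemma g_natCast (β : ℝ) (q : ℕ) :
    g β (q : ℤ) = (-1:ℝ)^q * Real.Gamma (β+1) /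
      (Real.Gamma (β/2 - q + 1) * Real.Gamma (β/2 + q + 1)) := by
  simp [g]

lemma pascal {β : ℝ} (hβ1 : 1 < β) (hβ2 : β ≤ 2) (q : ℕ) :
    Real.Gamma (β+1)/(Real.Gamma (β/2 - q) * Real.Gamma (β/2 + q + 2)) =
    Real.Gamma β/(Real.Gamma (β/2+q+2) * Real.Gamma (β/2-q-1)) +
    Real.Gamma β/(Real.Gamma (β/2+q+1) * Real.Gamma (β/2-q)) := by
  rcases lt_or_eq_of_le hβ2 with h2 | rfl
  · -- β < 2
    have hb1 : 1/2 < β/2 := by linarith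
    have hb2 : β/2 < 1 := by linarith
    have hq0 : (0:ℝ) ≤ q := Nat.cast_nonneg q
    have hpos1 : 0 < Real.Gamma (β/2+q+1) := Real.Gamma_pos_of_pos (by linarith)
    have hne1 : Real.Gamma (β/2+q+1) ≠ 0 := hpos1.ne'
    have hne2 : (β/2+(q:ℝ)+1) ≠ 0 := by positivity
    have hne3 : (β/2-(q:ℝ)-1) ≠ 0 := by intro h; nlinarith
    have hne4 : Real.Gamma (β/2-q-1) ≠ 0 := by
      apply Real.Gamma_ne_zero
      intro m hm
      rcases le_or_gt m q with h | h
      · have : (m:ℝ) ≤ q := Nat.cast_le.mpr h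
        linarith
      · have : (q:ℝ) + 1 ≤ m := by exact_mod_cast Nat.cast_le.mpr h
        linarith
    have e1 : Real.Gamma (β+1) = β * Real.Gamma β :=
      Real.Gamma_add_one (by linarith)
    have e2 : Real.Gamma (β/2+q+2) = (β/2+q+1) * Real.Gamma (β/2+q+1) := by
      have h := Real.Gamma_add_one hne2
      rw [show β/2+(q:ℝ)+1+1 = β/2+q+2 by ring] at h
      exact h
    have e3 : Real.Gamma (β/2-q) = (β/2-q-1) * Real.Gamma (β/2-q-1) := by
      have h := Real.Gamma_add_one hne3
      rw [show β/2-(q:ℝ)-1+1 = β/2-q by ring] at h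
      exact h
    rw [e1, e2, e3]
    set X := Real.Gamma (β/2+q+1) with hX
    set Y := Real.Gamma (β/2-q-1) with hY
    set G0 := Real.Gamma β with hG0
    rw [div_add_div _ _ (mul_ne_zero (mul_ne_zero hne2 hne1) hne4)
        (mul_ne_zero hne1 (mul_ne_zero hne3 hne4)),
      div_eq_div_iff (mul_ne_zero (mul_ne_zero hne3 hne4) (mul_ne_zero hne2 hne1))
        (mul_ne_zero (mul_ne_zero (mul_ne_zero hne2 hne1) hne4)
          (mul_ne_zero hne1 (mul_ne_zero hne3 hne4)))]
    ring
  · -- β = 2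
    norm_num
    cases q with
    | zero =>
      norm_num [Real.Gamma_one, Real.Gamma_zero]
    | succ p =>
      have z1 : Real.Gamma (1 - ((p+1:ℕ):ℝ)) = 0 := by
        rw [show (1:ℝ) - ((p+1:ℕ):ℝ) = -(p:ℕ) by push_cast; ring]
        exact Real.Gamma_neg_nat_eq_zero p
      have z2 : Real.Gamma (-((p+1:ℕ):ℝ)) = 0 := Real.Gamma_neg_nat_eq_zero (p+1)
      rw [z1] <;> try rw [z2]
      simp [z1, z2]

lemma g_symm (β : ℝ) (k : ℤ) : g β (-k) = g β k := by
  unfold g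
  have h1 : ((-1:ℝ))^(-k) = (-1:ℝ)^k := by
    rw [_root_.zpow_neg, ← _root_.inv_zpow, inv_neg, inv_one]
  rw [h1]
  push_cast
  ring_nf

lemma sum_g {β : ℝ} (hβ1 : 1 < β) (hβ2 : β ≤ 2) (q : ℕ) :
    ∑ k ∈ Finset.range (q+1), g β (k:ℤ) =
    (-1:ℝ)^q * Real.Gamma β / (Real.Gamma (β/2 + q + 1) * Real.Gamma (β/2 - q))
    + Real.Gamma β / (Real.Gamma (β/2) * Real.Gamma (β/2+1)) := by
  have hb0 : (0:ℝ) < β/2 := by linarith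
  have hgb : 0 < Real.Gamma (β/2) := Real.Gamma_pos_of_pos hb0
  have e2 : Real.Gamma (β/2+1) = (β/2) * Real.Gamma (β/2) := Real.Gamma_add_one hb0.ne'
  induction q with
  | zero =>
    rw [Finset.sum_range_one, g_natCast]
    norm_num
    have e1 : Real.Gamma (β+1) = β * Real.Gamma β := Real.Gamma_add_one (by linarith)
    rw [e1, e2]
    have hX : (β/2) * Real.Gamma (β/2) ≠ 0 := by positivity
    rw [div_add_div _ _ (mul_ne_zero hX hgb.ne') (mul_ne_zero hgb.ne' hX),
      div_eq_div_iff (mul_ne_zero hX hX)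
        (mul_ne_zero (mul_ne_zero hX hgb.ne') (mul_ne_zero hgb.ne' hX))]
    ring
  | succ q ih =>
    rw [Finset.sum_range_succ, ih, g_natCast]
    rw [show β/2 - ((q+1:ℕ):ℝ) + 1 = β/2 - (q:ℝ) by push_cast; ring,
        show β/2 + ((q+1:ℕ):ℝ) + 1 = β/2 + (q:ℝ) + 2 by push_cast; ring,
        show β/2 - ((q+1:ℕ):ℝ) = β/2 - (q:ℝ) - 1 by push_cast; ring]
    linear_combination ((-1:ℝ)^(q+1)) * pascal hβ1 hβ2 q

lemma T_nonneg {β : ℝ} (hβ1 : 1 < β) (hβ2 : β ≤ 2) (q : ℕ) :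
    0 ≤ (-1:ℝ)^q * Real.Gamma β / (Real.Gamma (β/2 + q + 1) * Real.Gamma (β/2 - q)) := by
  have h1 : (-1:ℝ)^q * Real.Gamma β / (Real.Gamma (β/2 + q + 1) * Real.Gamma (β/2 - q))
      = (Real.Gamma β / Real.Gamma (β/2 + q + 1)) * ((-1:ℝ)^q * (Real.Gamma (β/2 - q))⁻¹) := by
    ring
  rw [h1]
  have hq0 : (0:ℝ) ≤ q := Nat.cast_nonneg q
  refine mul_nonneg (div_nonneg ?_ ?_) (sign_gamma_inv_nonneg (by linarith) (by linarith) q)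
  · exact (Real.Gamma_pos_of_pos (by linarith)).le
  · exact (Real.Gamma_pos_of_pos (by linarith)).le

lemma C_pos {β : ℝ} (hβ1 : 1 < β) :
    0 < Real.Gamma β / (Real.Gamma (β/2) * Real.Gamma (β/2+1)) := by
  apply div_pos (Real.Gamma_pos_of_pos (by linarith))
  exact mul_pos (Real.Gamma_pos_of_pos (by linarith)) (Real.Gamma_pos_of_pos (by linarith))

lemma sum_g_pos {β : ℝ} (hβ1 : 1 < β) (hβ2 : β ≤ 2) (q : ℕ) :
    0 < ∑ k ∈ Finset.range (q+1), g β (k:ℤ) := by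
  rw [sum_g hβ1 hβ2 q]
  have := T_nonneg hβ1 hβ2 q
  have := C_pos hβ1
  linarith

lemma g_zero_eq {β : ℝ} (hβ1 : 1 < β) (hβ2 : β ≤ 2) :
    g β 0 = 2 * (Real.Gamma β / (Real.Gamma (β/2) * Real.Gamma (β/2+1))) := by
  have h := sum_g hβ1 hβ2 0
  rw [Finset.sum_range_one] at h
  norm_num at h
  rw [h]
  ring

lemma g_succ_nonpos {β : ℝ} (hβ1 : 1 < β) (hβ2 : β ≤ 2) (q : ℕ) :
    g β ((q:ℤ)+1) ≤ 0 := by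
  have h : ((q:ℤ)+1) = ((q+1:ℕ):ℤ) := by push_cast; ring
  rw [h, g_natCast]
  rw [show β/2 - ((q+1:ℕ):ℝ) + 1 = β/2 - (q:ℝ) by push_cast; ring,
      show β/2 + ((q+1:ℕ):ℝ) + 1 = β/2 + (q:ℝ) + 2 by push_cast; ring]
  have h2 : (-1:ℝ)^(q+1) * Real.Gamma (β+1) / (Real.Gamma (β/2 - q) * Real.Gamma (β/2+q+2))
      = -((Real.Gamma (β+1) / Real.Gamma (β/2+q+2)) * ((-1:ℝ)^q * (Real.Gamma (β/2-q))⁻¹)) := by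
    rw [pow_succ]
    ring
  rw [h2, neg_nonpos]
  have hq0 : (0:ℝ) ≤ q := Nat.cast_nonneg q
  refine mul_nonneg (div_nonneg ?_ ?_) (sign_gamma_inv_nonneg (by linarith) (by linarith) q)
  · exact (Real.Gamma_pos_of_pos (by linarith)).le
  · exact (Real.Gamma_pos_of_pos (by linarith)).le

lemma g_nonpos {β : ℝ} (hβ1 : 1 < β) (hβ2 : β ≤ 2) (k : ℤ) (hk : k ≠ 0) :
    g β k ≤ 0 := by
  obtain ⟨n, rfl | rfl⟩ := Int.eq_nat_or_neg k
  · cases n with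
    | zero => simp at hk
    | succ q =>
      have : ((q+1:ℕ):ℤ) = (q:ℤ)+1 := by push_cast; ring
      rw [this]
      exact g_succ_nonpos hβ1 hβ2 q
  · rw [g_symm]
    cases n with
    | zero => simp at hk
    | succ q =>
      have : ((q+1:ℕ):ℤ) = (q:ℤ)+1 := by push_cast; ring
      rw [this]
      exact g_succ_nonpos hβ1 hβ2 q

lemma g_one_neg {β : ℝ} (hβ1 : 1 < β) (hβ2 : β ≤ 2) : g β 1 < 0 := by
  unfold g
  have h1 : ((-1:ℝ))^(1:ℤ) = -1 := by norm_num
  rw [h1]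
  rw [show β/2 - (1:ℤ) + 1 = β/2 by push_cast; ring,
      show β/2 + (1:ℤ) + 1 = β/2 + 2 by push_cast; ring]
  have hg1 : 0 < Real.Gamma (β+1) := Real.Gamma_pos_of_pos (by linarith)
  have hg2 : 0 < Real.Gamma (β/2) := Real.Gamma_pos_of_pos (by linarith)
  have hg3 : 0 < Real.Gamma (β/2+2) := Real.Gamma_pos_of_pos (by linarith)
  have : -1 * Real.Gamma (β+1) / (Real.Gamma (β/2) * Real.Gamma (β/2+2))
      = -(Real.Gamma (β+1) / (Real.Gamma (β/2) * Real.Gamma (β/2+2))) := by ring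
  rw [this]
  exact neg_neg_of_pos (div_pos hg1 (mul_pos hg2 hg3))
lemma row_sum_eq (β : ℝ) {n : ℕ} (i : Fin n) :
    ∑ j : Fin n, g β ((i:ℤ) - (j:ℤ)) =
      (∑ k ∈ Finset.range ((i:ℕ)+1), g β (k:ℤ))
      + (∑ k ∈ Finset.range (n-(i:ℕ)), g β (k:ℤ)) - g β 0 := by
  have hi : (i:ℕ) + 1 ≤ n := i.isLt
  have h0 : ∑ j : Fin n, g β ((i:ℤ) - (j:ℤ))
      = ∑ j ∈ Finset.range n, g β (((i:ℕ):ℤ) - ((j:ℕ):ℤ)) :=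
    Fin.sum_univ_eq_sum_range (fun j => g β (((i:ℕ):ℤ) - ((j:ℕ):ℤ))) n
  rw [h0, ← Finset.sum_range_add_sum_Ico _ hi]
  have hfirst : ∑ j ∈ Finset.range ((i:ℕ)+1), g β (((i:ℕ):ℤ) - ((j:ℕ):ℤ))
      = ∑ k ∈ Finset.range ((i:ℕ)+1), g β (k:ℤ) := by
    rw [← Finset.sum_range_reflect]
    apply Finset.sum_congr rfl
    intro j hj
    have hj' : j ≤ (i:ℕ) := by
      have := Finset.mem_range.mp hj; omega
    congr 1
    omega
  have hsecond : ∑ j ∈ Finset.Ico ((i:ℕ)+1) n, g β (((i:ℕ):ℤ) - ((j:ℕ):ℤ))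
      = (∑ k ∈ Finset.range (n-(i:ℕ)), g β (k:ℤ)) - g β 0 := by
    rw [Finset.sum_Ico_eq_sum_range]
    have e1 : ∀ k : ℕ, g β (((i:ℕ):ℤ) - (((i:ℕ)+1+k:ℕ):ℤ)) = g β ((k:ℕ)+1) := by
      intro k
      rw [show ((i:ℕ):ℤ) - (((i:ℕ)+1+k:ℕ):ℤ) = -(((k:ℕ):ℤ)+1) by push_cast; ring,
        g_symm]
    have e2 : n - ((i:ℕ)+1) = n - (i:ℕ) - 1 := by omega
    rw [show n - (i:ℕ) = (n - (i:ℕ) - 1) + 1 by omega, Finset.sum_range_succ']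
    rw [e2]
    have : ∀ k ∈ Finset.range (n - (i:ℕ) - 1),
        g β (((i:ℕ):ℤ) - (((i:ℕ)+1+k:ℕ):ℤ)) = g β (((k+1:ℕ):ℤ)) := by
      intro k _
      rw [e1 k]
      congr 1
    rw [Finset.sum_congr rfl this]
    norm_num
  rw [hfirst, hsecond]
  ring


lemma row_nonneg {β : ℝ} (hβ1 : 1 < β) (hβ2 : β ≤ 2) {n : ℕ} (i : Fin n) :
    0 ≤ ∑ j : Fin n, g β ((i:ℤ) - (j:ℤ)) := by
  rw [row_sum_eq]
  have h1 : (i:ℕ) < n := i.isLt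
  have e : n - (i:ℕ) = (n - 1 - (i:ℕ)) + 1 := by omega
  rw [e, sum_g hβ1 hβ2 (i:ℕ), sum_g hβ1 hβ2 (n-1-(i:ℕ)), g_zero_eq hβ1 hβ2]
  have := T_nonneg hβ1 hβ2 (i:ℕ)
  have := T_nonneg hβ1 hβ2 (n-1-(i:ℕ))
  linarith

lemma row0_pos {β : ℝ} (hβ1 : 1 < β) (hβ2 : β ≤ 2) {n : ℕ} (hn : 0 < n) :
    0 < ∑ j : Fin n, g β (((⟨0,hn⟩ : Fin n):ℤ) - (j:ℤ)) := by
  rw [row_sum_eq]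
  have hc : ((⟨0,hn⟩ : Fin n) : ℕ) = 0 := rfl
  rw [hc]
  norm_num [Finset.sum_range_one]
  rw [show n = (n-1)+1 by omega]
  exact sum_g_pos hβ1 hβ2 _

lemma quad_form {n : ℕ} (A : Matrix (Fin n) (Fin n) ℝ) (hs : ∀ i j, A i j = A j i)
    (x : Fin n → ℝ) :
    x ⬝ᵥ (A *ᵥ x) = (∑ i, (∑ j, A i j) * x i^2)
      + (1/2) * ∑ i, ∑ j, (-(A i j)) * (x i - x j)^2 := by
  have h1 : ∑ i, ∑ j, A i j * x j^2 = ∑ i, ∑ j, A i j * x i^2 := by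
    rw [Finset.sum_comm]
    exact Finset.sum_congr rfl fun i _ => Finset.sum_congr rfl fun j _ => by rw [hs]
  have key : ∑ i, ∑ j, (-(A i j)) * (x i - x j)^2
      = 2 * (∑ i, ∑ j, A i j * (x i * x j)) - 2 * (∑ i, ∑ j, A i j * x i^2) := by
    have e : ∀ i j, (-(A i j)) * (x i - x j)^2
        = 2*(A i j * (x i * x j)) - (A i j * x i^2 + A i j * x j^2) := by
      intros; ring
    simp_rw [e, Finset.sum_sub_distrib, Finset.sum_add_distrib, ← Finset.mul_sum]
    rw [h1]
    ring
  have lhse : x ⬝ᵥ (A *ᵥ x) = ∑ i, ∑ j, A i j * (x i * x j) := by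
    simp only [dotProduct, Matrix.mulVec, Finset.mul_sum]
    exact Finset.sum_congr rfl fun i _ => Finset.sum_congr rfl fun j _ => by ring
  have rhse : ∀ i : Fin n, (∑ j, A i j) * x i ^2 = ∑ j, A i j * x i^2 :=
    fun i => Finset.sum_mul _ _ _
  rw [lhse]
  simp_rw [rhse]
  rw [key]
  ring


/-- The Toeplitz matrix `G` is symmetric and positive definite. -/
theorem Gmat_isSymm_posDef (β : ℝ) (hβ1 : 1 < β) (hβ2 : β ≤ 2) (M : ℕ) (hM : 2 ≤ M) :
    (Gmat β M).IsSymm ∧ (Gmat β M).PosDef := by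
  have hn : 0 < M - 1 := by omega
  have hsym : ∀ i j, Gmat β M i j = Gmat β M j i := by
    intro i j
    show g β ((i:ℤ)-(j:ℤ)) = g β ((j:ℤ)-(i:ℤ))
    rw [show (i:ℤ)-(j:ℤ) = -((j:ℤ)-(i:ℤ)) by ring, g_symm]
  have hIsSymm : (Gmat β M).IsSymm := Matrix.ext fun i j => by
    rw [Matrix.transpose_apply]; exact hsym j i
  refine ⟨hIsSymm, Matrix.posDef_iff_dotProduct_mulVec.mpr ⟨?_, ?_⟩⟩
  · rw [Matrix.IsHermitian, Matrix.conjTranspose_eq_transpose_of_trivial]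
    exact hIsSymm
  · intro x hx
    rw [star_trivial, quad_form _ hsym x]
    have hrow : ∀ i : Fin (M-1), 0 ≤ (∑ j, Gmat β M i j) := by
      intro i
      simpa [Gmat] using row_nonneg hβ1 hβ2 i
    have hterm1 : ∀ i : Fin (M-1), 0 ≤ (∑ j, Gmat β M i j) * x i^2 :=
      fun i => mul_nonneg (hrow i) (sq_nonneg _)
    have hterm2 : ∀ i j : Fin (M-1), 0 ≤ (-(Gmat β M i j)) * (x i - x j)^2 := by
      intro i j
      rcases eq_or_ne i j with rfl | hne
      · simp
      · apply mul_nonneg _ (sq_nonneg _)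
        rw [neg_nonneg]
        apply g_nonpos hβ1 hβ2
        intro h
        apply hne
        have hij : (i:ℤ) = (j:ℤ) := by omega
        exact Fin.ext (by exact_mod_cast hij)
    have hS1 : 0 ≤ ∑ i, (∑ j, Gmat β M i j) * x i^2 :=
      Finset.sum_nonneg fun i _ => hterm1 i
    have hS2 : 0 ≤ ∑ i, ∑ j, (-(Gmat β M i j)) * (x i - x j)^2 :=
      Finset.sum_nonneg fun i _ => Finset.sum_nonneg fun j _ => hterm2 i j
    by_cases hx0 : x ⟨0, hn⟩ = 0
    · -- minimal nonzero index is positive; use an adjacent-difference term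
      classical
      have hex : ∃ m : ℕ, ∃ h : m < M - 1, x ⟨m, h⟩ ≠ 0 := by
        rcases Function.ne_iff.mp hx with ⟨i, hi⟩
        exact ⟨(i:ℕ), i.isLt, by simpa using hi⟩
      obtain ⟨hmlt, hxm⟩ := Nat.find_spec hex
      have hm0 : Nat.find hex ≠ 0 := by
        intro h0
        apply hxm
        have : (⟨Nat.find hex, hmlt⟩ : Fin (M-1)) = ⟨0, hn⟩ := Fin.ext h0
        rw [this, hx0]
      obtain ⟨p, hp⟩ := Nat.exists_eq_succ_of_ne_zero hm0
      have hplt : p < M - 1 := by omega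
      have hxp : x ⟨p, hplt⟩ = 0 := by
        by_contra h
        exact Nat.find_min hex (show p < Nat.find hex by omega) ⟨hplt, h⟩
      set i0 : Fin (M-1) := ⟨p+1, by omega⟩ with hi0def
      set j0 : Fin (M-1) := ⟨p, hplt⟩ with hj0def
      have hxi0 : x i0 ≠ 0 := by
        have : i0 = ⟨Nat.find hex, hmlt⟩ := Fin.ext (by simp [hi0def, hp])
        rw [this]
        exact hxm
      have hGij : Gmat β M i0 j0 = g β 1 := by
        show g β ((i0:ℤ) - (j0:ℤ)) = g β 1
        congr 1
        have h1 : (i0:ℤ) = (p:ℤ)+1 := by simp [hi0def]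
        have h2 : (j0:ℤ) = (p:ℤ) := by simp [hj0def]
        rw [h1, h2]; ring
      have hpos : 0 < (-(Gmat β M i0 j0)) * (x i0 - x j0)^2 := by
        rw [hGij, show x j0 = 0 from hxp, sub_zero]
        have hneg : 0 < -g β 1 := neg_pos.mpr (g_one_neg hβ1 hβ2)
        have hsq : 0 < x i0 ^ 2 :=
          lt_of_le_of_ne (sq_nonneg _) (Ne.symm (pow_ne_zero 2 hxi0))
        exact mul_pos hneg hsq
      have hchain : (-(Gmat β M i0 j0)) * (x i0 - x j0)^2
          ≤ ∑ i, ∑ j, (-(Gmat β M i j)) * (x i - x j)^2 := by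
        calc (-(Gmat β M i0 j0)) * (x i0 - x j0)^2
            ≤ ∑ j, (-(Gmat β M i0 j)) * (x i0 - x j)^2 :=
              Finset.single_le_sum (fun j _ => hterm2 i0 j) (Finset.mem_univ j0)
          _ ≤ ∑ i, ∑ j, (-(Gmat β M i j)) * (x i - x j)^2 :=
              Finset.single_le_sum
                (fun i _ => Finset.sum_nonneg fun j _ => hterm2 i j)
                (Finset.mem_univ i0)
      linarith
    · -- x₀ ≠ 0 : use the positive first row sum
      have hrow0 : 0 < ∑ j, Gmat β M ⟨0,hn⟩ j := by
        simpa [Gmat] using row0_pos hβ1 hβ2 hn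
      have h0pos : 0 < (∑ j, Gmat β M ⟨0,hn⟩ j) * x ⟨0,hn⟩^2 := by
        apply mul_pos hrow0
        exact lt_of_le_of_ne (sq_nonneg _) (Ne.symm (pow_ne_zero 2 hx0))
      have hchain : (∑ j, Gmat β M ⟨0,hn⟩ j) * x ⟨0,hn⟩^2
          ≤ ∑ i, (∑ j, Gmat β M i j) * x i^2 :=
        Finset.single_le_sum (fun i _ => hterm1 i) (Finset.mem_univ _)
      linarith
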